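/- Let A ∈ ℝ^{m×n} have rank n with QR factorization A = QR and let ΔA ∈ ℝ^{m×n}. If ‖H_R‖₂ (‖G_R‖₂‖ΔA‖_F + ‖H_R‖₂‖ΔA‖_F²) < 1/4, then A + ΔA has a unique QR factorization A + ΔA = (Q + ΔQ)(R + ΔR) with (Q + ΔQ)^T(Q + ΔQ) = I_n and R + ΔR upper triangular with positive diagonal entries, and moreover ‖ΔR‖_F ≤ 2(‖G_R‖₂‖Q^T(ΔA)‖_F + ‖H_R‖₂‖ΔA‖_F²) / (1 + √(1 − 4‖H_R‖₂(‖G_R‖₂‖Q^T(ΔA)‖_F + ‖H_R‖₂‖ΔA‖_F²))) ≤ 2(‖G_R‖₂‖Q^T(ΔA)‖_F + ‖H_R‖₂‖ΔA‖_F²). -/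

import Mathlib

/-!
Write `E = Qᵀ ΔA`. Since `(Q R + ΔA)ᵀ (Q R + ΔA) = Rᵀ R + Rᵀ E + Eᵀ R + ΔAᵀ ΔA`, the matrix
`R + ΔR` is the Cholesky factor of `(A + ΔA)ᵀ (A + ΔA)` as soon as `ΔR` is upper triangular and
`Rᵀ ΔR + ΔRᵀ R = S := Rᵀ E + Eᵀ R + ΔAᵀ ΔA - ΔRᵀ ΔR`. For symmetric `S` the upper triangular
solution of this linear equation is `up (R⁻ᵀ S R⁻¹) R`, whose `uvec` is `H_R vec S`; as
`G_R vec E = H_R vec (Rᵀ E + Eᵀ R)`, the problem becomes the fixed-point equation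
`uvec ΔR = G_R vec E + H_R vec (ΔAᵀ ΔA - ΔRᵀ ΔR)`.
With `g = ‖G_R‖₂`, `h = ‖H_R‖₂` and `c = g ‖E‖_F + h ‖ΔA‖_F²`, the right-hand side maps the ball
of radius `ρ = 2c / (1 + √(1 - 4hc))` into itself and is a contraction there with constant
`2hρ < 1`, so Banach's theorem gives `ΔR` with `‖ΔR‖_F ≤ ρ ≤ 2c`. Applying `H_R` to
`vec (e_i e_iᵀ)` shows `h ≥ 1 / (2 r_ii)`, so `|Δr_ii| ≤ ρ < r_ii` and the new diagonal stays
positive. Uniqueness is uniqueness of the Cholesky factor.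
-/

open Matrix Kronecker

noncomputable section

/-- Frobenius norm of a real matrix. -/
noncomputable def frob {m k : Type*} [Fintype m] [Fintype k] (A : Matrix m k ℝ) : ℝ :=
  Real.sqrt (∑ i, ∑ j, (A i j) ^ 2)

/-- Euclidean norm of a vector. -/
noncomputable def vnorm {m : Type*} [Fintype m] (v : m → ℝ) : ℝ :=
  Real.sqrt (∑ i, (v i) ^ 2)

/-- Spectral norm (ℓ²-operator norm) of a real matrix. -/
noncomputable def spec {m k : Type*} [Fintype m] [Fintype k] [DecidableEq k]
    (A : Matrix m k ℝ) : ℝ :=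
  ‖LinearMap.toContinuousLinearMap (Matrix.toEuclideanLin A)‖

/-- Entrywise absolute value of a matrix. -/
def eabs {m k : Type*} (A : Matrix m k ℝ) : Matrix m k ℝ :=
  Matrix.of fun i j => |A i j|

/-- Column-stacking operator: `vec X` indexed by (column, row). -/
def vec {n : ℕ} (X : Matrix (Fin n) (Fin n) ℝ) : Fin n × Fin n → ℝ :=
  fun p => X p.2 p.1

/-- Upper triangular part of a matrix. -/
def ut {n : ℕ} (X : Matrix (Fin n) (Fin n) ℝ) : Matrix (Fin n) (Fin n) ℝ :=
  Matrix.of fun i j => if i ≤ j then X i j else 0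

/-- Strictly lower triangular part of a matrix. -/
def slt {n : ℕ} (X : Matrix (Fin n) (Fin n) ℝ) : Matrix (Fin n) (Fin n) ℝ :=
  Matrix.of fun i j => if j < i then X i j else 0

/-- Upper triangular part with diagonal halved. -/
def up {n : ℕ} (X : Matrix (Fin n) (Fin n) ℝ) : Matrix (Fin n) (Fin n) ℝ :=
  Matrix.of fun i j => if i = j then X i j / 2 else if i ≤ j then X i j else 0

/-- `M_ut`: diagonal matrix with `vec (ut X) = (Mut n).mulVec (vec X)`. -/
def Mut (n : ℕ) : Matrix (Fin n × Fin n) (Fin n × Fin n) ℝ :=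
  Matrix.diagonal fun p => if p.2 ≤ p.1 then 1 else 0

/-- `M_slt`: diagonal matrix with `vec (slt X) = (Mslt n).mulVec (vec X)`. -/
def Mslt (n : ℕ) : Matrix (Fin n × Fin n) (Fin n × Fin n) ℝ :=
  Matrix.diagonal fun p => if p.1 < p.2 then 1 else 0

/-- `M_up`: diagonal matrix with `vec (up X) = (Mup n).mulVec (vec X)`. -/
def Mup (n : ℕ) : Matrix (Fin n × Fin n) (Fin n × Fin n) ℝ :=
  Matrix.diagonal fun p => if p.2 = p.1 then (1 : ℝ) / 2 else if p.2 < p.1 then 1 else 0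

/-- `M_uvec`: 0–1 row-selection matrix extracting entries on or above the diagonal. -/
def Muvec (n : ℕ) : Matrix {p : Fin n × Fin n // p.2 ≤ p.1} (Fin n × Fin n) ℝ :=
  Matrix.of fun q p => if (q : Fin n × Fin n) = p then 1 else 0

/-- `M_slvec`: 0–1 row-selection matrix extracting entries strictly below the diagonal. -/
def Mslvec (n : ℕ) : Matrix {p : Fin n × Fin n // p.1 < p.2} (Fin n × Fin n) ℝ :=
  Matrix.of fun q p => if (q : Fin n × Fin n) = p then 1 else 0

/-- The vec-permutation matrix `Π_{nn}` with `(vecPerm n).mulVec (vec X) = vec Xᵀ`. -/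
def vecPerm (n : ℕ) : Matrix (Fin n × Fin n) (Fin n × Fin n) ℝ :=
  Matrix.of fun p q => if p.1 = q.2 ∧ p.2 = q.1 then 1 else 0

def IsUnitLowerTri {n : ℕ} (L : Matrix (Fin n) (Fin n) ℝ) : Prop :=
  (∀ i, L i i = 1) ∧ ∀ i j : Fin n, i < j → L i j = 0

def IsLowerTri {n : ℕ} (L : Matrix (Fin n) (Fin n) ℝ) : Prop :=
  ∀ i j : Fin n, i < j → L i j = 0

def IsUpperTri {n : ℕ} (U : Matrix (Fin n) (Fin n) ℝ) : Prop :=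
  ∀ i j : Fin n, j < i → U i j = 0

def IsStrictLowerTri {n : ℕ} (X : Matrix (Fin n) (Fin n) ℝ) : Prop :=
  ∀ i j : Fin n, i ≤ j → X i j = 0

/-- Leading (n−1)×(n−1) principal submatrix. -/
def lead {n : ℕ} (U : Matrix (Fin n) (Fin n) ℝ) : Matrix (Fin (n - 1)) (Fin (n - 1)) ℝ :=
  Matrix.of fun i j => U (Fin.castLE (Nat.sub_le n 1) i) (Fin.castLE (Nat.sub_le n 1) j)

/-- `pad B` is the n×n matrix with B as leading (n−1)×(n−1) block and zeros elsewhere. -/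
def pad {n : ℕ} (B : Matrix (Fin (n - 1)) (Fin (n - 1)) ℝ) : Matrix (Fin n) (Fin n) ℝ :=
  Matrix.of fun i j =>
    if h1 : (i : ℕ) < n - 1 then
      if h2 : (j : ℕ) < n - 1 then B ⟨i, h1⟩ ⟨j, h2⟩ else 0
    else 0

/-- `Y_L = M_slvec (I_n ⊗ L) M_slt (diag(U_{n−1}^{−T}, 0) ⊗ L^{−1})`. -/
noncomputable def YL {n : ℕ} (L U : Matrix (Fin n) (Fin n) ℝ) :
    Matrix {p : Fin n × Fin n // p.1 < p.2} (Fin n × Fin n) ℝ :=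
  Mslvec n * ((1 : Matrix (Fin n) (Fin n) ℝ) ⊗ₖ L) * Mslt n *
    (pad (((lead U)⁻¹)ᵀ) ⊗ₖ L⁻¹)

/-- `Y_U = M_uvec (Uᵀ ⊗ I_n) M_ut (U^{−T} ⊗ L^{−1})`. -/
noncomputable def YU {n : ℕ} (L U : Matrix (Fin n) (Fin n) ℝ) :
    Matrix {p : Fin n × Fin n // p.2 ≤ p.1} (Fin n × Fin n) ℝ :=
  Muvec n * (Uᵀ ⊗ₖ (1 : Matrix (Fin n) (Fin n) ℝ)) * Mut n * ((U⁻¹)ᵀ ⊗ₖ L⁻¹)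

/-- `G_R = M_uvec (Rᵀ ⊗ I_n) M_up [R^{−T} ⊗ I_n + (I_n ⊗ R^{−T}) Π_{nn}]`. -/
noncomputable def GR {n : ℕ} (R : Matrix (Fin n) (Fin n) ℝ) :
    Matrix {p : Fin n × Fin n // p.2 ≤ p.1} (Fin n × Fin n) ℝ :=
  Muvec n * (Rᵀ ⊗ₖ (1 : Matrix (Fin n) (Fin n) ℝ)) * Mup n *
    ((R⁻¹)ᵀ ⊗ₖ (1 : Matrix (Fin n) (Fin n) ℝ) +
      ((1 : Matrix (Fin n) (Fin n) ℝ) ⊗ₖ (R⁻¹)ᵀ) * vecPerm n)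

/-- `H_R = M_uvec (Rᵀ ⊗ I_n) M_up (R^{−T} ⊗ R^{−T})`. -/
noncomputable def HR {n : ℕ} (R : Matrix (Fin n) (Fin n) ℝ) :
    Matrix {p : Fin n × Fin n // p.2 ≤ p.1} (Fin n × Fin n) ℝ :=
  Muvec n * (Rᵀ ⊗ₖ (1 : Matrix (Fin n) (Fin n) ℝ)) * Mup n * ((R⁻¹)ᵀ ⊗ₖ (R⁻¹)ᵀ)

namespace Matrix

variable {κ ι : Type*} [Fintype κ] [Fintype ι]

section

variable [DecidableEq ι]

theorem exists_orthonormal_mul_eq_of_transpose_mul_self_eq {C : Matrix κ ι ℝ}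
    {R : Matrix ι ι ℝ} (hdet : IsUnit R.det) (h : Cᵀ * C = Rᵀ * R) :
    ∃ Q : Matrix κ ι ℝ, Qᵀ * Q = 1 ∧ C = Q * R := by
  refine ⟨C * R⁻¹, ?_, by rw [Matrix.mul_assoc, nonsing_inv_mul _ hdet, Matrix.mul_one]⟩
  rw [transpose_mul, Matrix.mul_assoc, ← Matrix.mul_assoc Cᵀ, h, Matrix.mul_assoc Rᵀ,
    mul_nonsing_inv _ hdet, Matrix.mul_one, ← transpose_mul, mul_nonsing_inv _ hdet, transpose_one]

theorem transpose_mul_self_of_orthonormal {Q : Matrix κ ι ℝ} (hQ : Qᵀ * Q = 1)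
    (R : Matrix ι ι ℝ) : (Q * R)ᵀ * (Q * R) = Rᵀ * R := by
  rw [transpose_mul, Matrix.mul_assoc, ← Matrix.mul_assoc Qᵀ, hQ, Matrix.one_mul]

end

variable [LinearOrder ι]

theorem IsUpperTriangular.mul_apply_self {α : Type*} [NonUnitalNonAssocSemiring α]
    {X Y : Matrix ι ι α} (hX : X.IsUpperTriangular) (hY : Y.IsUpperTriangular) (i : ι) :
    (X * Y) i i = X i i * Y i i := by
  rw [mul_apply]
  refine Finset.sum_eq_single i (fun k _ hk => ?_) (by simp)
  rcases hk.lt_or_gt with hki | hik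
  · rw [hX hki, zero_mul]
  · rw [hY hik, mul_zero]

theorem IsUpperTriangular.inv {K : Type*} [Field K] {R : Matrix ι ι K}
    (hR : R.IsUpperTriangular) (hdet : IsUnit R.det) : R⁻¹.IsUpperTriangular :=
  have := R.invertibleOfIsUnitDet hdet
  blockTriangular_inv_of_blockTriangular hR

theorem IsUpperTriangular.inv_apply_self {K : Type*} [Field K]
    {R : Matrix ι ι K} (hR : R.IsUpperTriangular) (hdet : IsUnit R.det) (i : ι) :
    R⁻¹ i i = (R i i)⁻¹ := by
  refine eq_inv_of_mul_eq_one_right ?_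
  rw [← hR.mul_apply_self (hR.inv hdet), mul_nonsing_inv R hdet, one_apply_eq]

theorem IsUpperTriangular.isUnit_det {R : Matrix ι ι ℝ} (hR : R.IsUpperTriangular)
    (hpos : ∀ i, 0 < R i i) : IsUnit R.det := by
  rw [det_of_isUpperTriangular hR]
  exact (Finset.prod_pos fun i _ => hpos i).ne'.isUnit

theorem IsUpperTriangular.eq_one_of_transpose_mul_self {T : Matrix ι ι ℝ}
    (hT : T.IsUpperTriangular) (hpos : ∀ i, 0 < T i i) (horth : Tᵀ * T = 1) : T = 1 := by
  have hlower : Tᵀ.IsUpperTriangular := by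
    rw [← inv_eq_left_inv horth]
    exact hT.inv (hT.isUnit_det hpos)
  ext i j
  rcases lt_trichotomy i j with hij | rfl | hji
  · rw [← transpose_apply T j i, hlower hij, one_apply_ne hij.ne]
  · have hii : (Tᵀ * T) i i = T i i * T i i := hlower.mul_apply_self hT i
    rw [horth, one_apply_eq] at hii
    rw [one_apply_eq]
    nlinarith [hpos i]
  · rw [hT hji, one_apply_ne hji.ne']

theorem IsUpperTriangular.eq_of_transpose_mul_self_eq {R₁ R₂ : Matrix ι ι ℝ}
    (h₁ : R₁.IsUpperTriangular) (hpos₁ : ∀ i, 0 < R₁ i i)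
    (h₂ : R₂.IsUpperTriangular) (hpos₂ : ∀ i, 0 < R₂ i i)
    (h : R₁ᵀ * R₁ = R₂ᵀ * R₂) : R₁ = R₂ := by
  have hdet := h₂.isUnit_det hpos₂
  have hT : (R₁ * R₂⁻¹).IsUpperTriangular := h₁.mul (h₂.inv hdet)
  have hTpos : ∀ i, 0 < (R₁ * R₂⁻¹) i i := fun i => by
    rw [h₁.mul_apply_self (h₂.inv hdet), h₂.inv_apply_self hdet]
    exact mul_pos (hpos₁ i) (inv_pos.mpr (hpos₂ i))
  have horth : (R₁ * R₂⁻¹)ᵀ * (R₁ * R₂⁻¹) = 1 := by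
    rw [transpose_mul, Matrix.mul_assoc, ← Matrix.mul_assoc R₁ᵀ, h, Matrix.mul_assoc R₂ᵀ,
      mul_nonsing_inv _ hdet, Matrix.mul_one, ← transpose_mul, mul_nonsing_inv _ hdet,
      transpose_one]
  rw [← Matrix.mul_one R₁, ← nonsing_inv_mul _ hdet, ← Matrix.mul_assoc,
    hT.eq_one_of_transpose_mul_self hTpos horth, Matrix.one_mul]

theorem qr_unique {C Q₁ Q₂ : Matrix κ ι ℝ} {R₁ R₂ : Matrix ι ι ℝ}
    (hQ₁ : Q₁ᵀ * Q₁ = 1) (hR₁ : R₁.IsUpperTriangular) (hpos₁ : ∀ i, 0 < R₁ i i)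
    (hQ₂ : Q₂ᵀ * Q₂ = 1) (hR₂ : R₂.IsUpperTriangular) (hpos₂ : ∀ i, 0 < R₂ i i)
    (hC₁ : C = Q₁ * R₁) (hC₂ : C = Q₂ * R₂) : Q₁ = Q₂ ∧ R₁ = R₂ := by
  have hR : R₁ = R₂ := hR₁.eq_of_transpose_mul_self_eq hpos₁ hR₂ hpos₂ <| by
    rw [← transpose_mul_self_of_orthonormal hQ₁, ← transpose_mul_self_of_orthonormal hQ₂, ← hC₁,
      ← hC₂]
  have hdet := hR₂.isUnit_det hpos₂
  refine ⟨?_, hR⟩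
  rw [← Matrix.mul_one Q₁, ← Matrix.mul_one Q₂, ← mul_nonsing_inv _ hdet, ← Matrix.mul_assoc,
    ← Matrix.mul_assoc, ← hC₂, ← hR, ← hC₁]

end Matrix

section Norms

open scoped Matrix.Norms.Frobenius

variable {κ ι : Type*} [Fintype κ] [Fintype ι]

theorem vnorm_eq_norm (f : ι → ℝ) : vnorm f = ‖WithLp.toLp 2 f‖ := by
  simp [vnorm, EuclideanSpace.norm_eq]

theorem abs_apply_le_vnorm (f : ι → ℝ) (i : ι) : |f i| ≤ vnorm f := by
  rw [vnorm_eq_norm]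
  exact PiLp.norm_apply_le (WithLp.toLp 2 f) i

theorem vnorm_add_le (f g : ι → ℝ) : vnorm (f + g) ≤ vnorm f + vnorm g := by
  simpa only [vnorm_eq_norm, WithLp.toLp_add] using norm_add_le _ _

theorem vnorm_mulVec_le [DecidableEq ι] (M : Matrix κ ι ℝ) (v : ι → ℝ) :
    vnorm (M *ᵥ v) ≤ spec M * vnorm v := by
  rw [vnorm_eq_norm, vnorm_eq_norm]
  exact (LinearMap.toContinuousLinearMap (toEuclideanLin M)).le_opNorm _

theorem spec_nonneg [DecidableEq ι] (M : Matrix κ ι ℝ) : 0 ≤ spec M := norm_nonneg _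

theorem frob_eq_norm (X : Matrix κ ι ℝ) : frob X = ‖X‖ := by
  simp [frob, frobenius_norm_def, Real.sqrt_eq_rpow]

theorem frob_nonneg (X : Matrix κ ι ℝ) : 0 ≤ frob X := Real.sqrt_nonneg _

theorem abs_apply_le_frob (X : Matrix κ ι ℝ) (i : κ) (j : ι) : |X i j| ≤ frob X := by
  rw [frob, ← Real.sqrt_sq_eq_abs]
  refine Real.sqrt_le_sqrt ((Finset.single_le_sum (f := fun j => X i j ^ 2) (fun _ _ => sq_nonneg _)
    (Finset.mem_univ j)).trans ?_)
  exact Finset.single_le_sum (f := fun i => ∑ j, X i j ^ 2)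
    (fun _ _ => Finset.sum_nonneg fun _ _ => sq_nonneg _) (Finset.mem_univ i)

theorem frob_sq_eq_trace (X : Matrix κ ι ℝ) : frob X ^ 2 = (Xᵀ * X).trace := by
  rw [frob, Real.sq_sqrt (by positivity), Finset.sum_comm]
  simp [trace, mul_apply, sq]

theorem frob_transpose_mul_le {ι' : Type*} [Fintype ι'] [DecidableEq ι] {Q : Matrix κ ι ℝ}
    (hQ : Qᵀ * Q = 1) (X : Matrix κ ι' ℝ) : frob (Qᵀ * X) ≤ frob X := by
  set B := Qᵀ * X
  -- Pythagoras for `X = Q B + (X - Q B)`, whose two summands have orthogonal columns.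
  have hgram : (X - Q * B)ᵀ * (X - Q * B) = Xᵀ * X - Bᵀ * B := by
    have hXQ : Xᵀ * Q = Bᵀ := by rw [transpose_mul, transpose_transpose]
    rw [transpose_sub, transpose_mul, Matrix.sub_mul, Matrix.mul_sub, Matrix.mul_sub,
      ← Matrix.mul_assoc, hXQ, Matrix.mul_assoc, Matrix.mul_assoc, ← Matrix.mul_assoc Qᵀ Q, hQ,
      Matrix.one_mul]
    abel
  have hsq : frob B ^ 2 + frob (X - Q * B) ^ 2 = frob X ^ 2 := by
    rw [frob_sq_eq_trace, frob_sq_eq_trace, frob_sq_eq_trace, hgram, trace_sub]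
    ring
  exact le_of_sq_le_sq (by nlinarith [sq_nonneg (frob (X - Q * B))]) (frob_nonneg X)

theorem frob_sub_le (X Y : Matrix κ ι ℝ) : frob (X - Y) ≤ frob X + frob Y := by
  simpa only [frob_eq_norm] using norm_sub_le X Y

theorem frob_sub_comm (X Y : Matrix κ ι ℝ) : frob (X - Y) = frob (Y - X) := by
  simp only [frob_eq_norm, norm_sub_rev]

theorem frob_transpose_mul_self_le (X : Matrix κ ι ℝ) : frob (Xᵀ * X) ≤ frob X ^ 2 := by
  simpa only [frob_eq_norm, frobenius_norm_transpose, sq] using frobenius_norm_mul Xᵀ X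

theorem frob_transpose_mul_self_sub_le (X Y : Matrix κ ι ℝ) :
    frob (Xᵀ * X - Yᵀ * Y) ≤ (frob X + frob Y) * frob (X - Y) := by
  have hsplit : Xᵀ * X - Yᵀ * Y = Xᵀ * (X - Y) + (X - Y)ᵀ * Y := by
    rw [Matrix.mul_sub, transpose_sub, Matrix.sub_mul]
    abel
  simp only [frob_eq_norm, hsplit]
  calc ‖Xᵀ * (X - Y) + (X - Y)ᵀ * Y‖ ≤ ‖Xᵀ‖ * ‖X - Y‖ + ‖(X - Y)ᵀ‖ * ‖Y‖ :=
        (norm_add_le _ _).trans (add_le_add (frobenius_norm_mul _ _) (frobenius_norm_mul _ _))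
    _ = (‖X‖ + ‖Y‖) * ‖X - Y‖ := by simp only [frobenius_norm_transpose]; ring

end Norms

section Vec

variable {n : ℕ}

abbrev UpperIdx (n : ℕ) := {p : Fin n × Fin n // p.2 ≤ p.1}

/-- The entries of `X` on or above the diagonal, indexed like the rows of `M_uvec`. -/
def uvec (X : Matrix (Fin n) (Fin n) ℝ) : UpperIdx n → ℝ := fun q => X q.1.2 q.1.1

def fromUvec (w : UpperIdx n → ℝ) : Matrix (Fin n) (Fin n) ℝ :=
  Matrix.of fun i j => if h : i ≤ j then w ⟨(j, i), h⟩ else 0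

theorem isUpperTriangular_fromUvec (w : UpperIdx n → ℝ) : (fromUvec w).IsUpperTriangular :=
  fun _ _ hji => dif_neg (not_le.mpr hji)

theorem uvec_fromUvec (w : UpperIdx n → ℝ) : uvec (fromUvec w) = w := by
  funext q
  simp [uvec, fromUvec, q.2]

theorem fromUvec_uvec {X : Matrix (Fin n) (Fin n) ℝ} (hX : X.IsUpperTriangular) :
    fromUvec (uvec X) = X := by
  ext i j
  by_cases h : i ≤ j
  · simp [fromUvec, uvec, h]
  · simp [fromUvec, h, hX (not_le.mp h)]

theorem fromUvec_sub (w w' : UpperIdx n → ℝ) : fromUvec (w - w') = fromUvec w - fromUvec w' := by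
  ext i j
  by_cases h : i ≤ j <;> simp [fromUvec, h]

theorem vnorm_uvec {X : Matrix (Fin n) (Fin n) ℝ} (hX : X.IsUpperTriangular) :
    vnorm (uvec X) = frob X := by
  have hlower : ∑ q : {p : Fin n × Fin n // ¬p.2 ≤ p.1}, X q.1.2 q.1.1 ^ 2 = 0 :=
    Finset.sum_eq_zero fun q _ => by simp [hX (not_le.mp q.2)]
  rw [vnorm, frob, Finset.sum_comm, ← Fintype.sum_prod_type' (fun j i => X i j ^ 2),
    ← Fintype.sum_subtype_add_sum_subtype (fun p : Fin n × Fin n => p.2 ≤ p.1), hlower, add_zero]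
  rfl

theorem frob_fromUvec (w : UpperIdx n → ℝ) : frob (fromUvec w) = vnorm w := by
  rw [← vnorm_uvec (isUpperTriangular_fromUvec w), uvec_fromUvec]

theorem vnorm_vec (X : Matrix (Fin n) (Fin n) ℝ) : vnorm (_root_.vec X) = frob X := by
  rw [frob, vnorm, Fintype.sum_prod_type, Finset.sum_comm]
  rfl

theorem kronecker_mulVec_vec (A B X : Matrix (Fin n) (Fin n) ℝ) :
    (A ⊗ₖ B) *ᵥ _root_.vec X = _root_.vec (B * X * Aᵀ) := by
  funext p
  simp only [mulVec, dotProduct, _root_.vec, mul_apply, kroneckerMap_apply, transpose_apply,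
    Finset.sum_mul, Fintype.sum_prod_type]
  exact Finset.sum_congr rfl fun k _ => Finset.sum_congr rfl fun l _ => by ring

theorem Mup_mulVec_vec (X : Matrix (Fin n) (Fin n) ℝ) :
    Mup n *ᵥ _root_.vec X = _root_.vec (up X) := by
  funext p
  simp only [Mup, mulVec_diagonal, _root_.vec, up, of_apply]
  split_ifs with h₁ h₂ h₃ h₃
  · rw [h₁]; ring
  · exact one_mul _
  · exact absurd h₂.le h₃
  · exact absurd (lt_of_le_of_ne h₃ h₁) h₂
  · exact zero_mul _

theorem Muvec_mulVec_vec (X : Matrix (Fin n) (Fin n) ℝ) : Muvec n *ᵥ _root_.vec X = uvec X := by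
  funext q
  simp [Muvec, mulVec, dotProduct, uvec, _root_.vec]

theorem vecPerm_mulVec_vec (X : Matrix (Fin n) (Fin n) ℝ) :
    vecPerm n *ᵥ _root_.vec X = _root_.vec Xᵀ := by
  funext p
  have hswap : ∀ q : Fin n × Fin n, (p.1 = q.2 ∧ p.2 = q.1) ↔ q = p.swap := fun q => by
    rw [Prod.ext_iff, Prod.fst_swap, Prod.snd_swap, and_comm, eq_comm, @eq_comm _ q.2]
  simp [vecPerm, mulVec, dotProduct, _root_.vec, hswap]

theorem isUpperTriangular_up (X : Matrix (Fin n) (Fin n) ℝ) : (up X).IsUpperTriangular :=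
  fun i j (hji : j < i) => by simp [up, hji.ne', not_le.mpr hji]

theorem up_apply_self (X : Matrix (Fin n) (Fin n) ℝ) (i : Fin n) : up X i i = X i i / 2 := by
  simp [up]

theorem up_add_transpose_up {S : Matrix (Fin n) (Fin n) ℝ} (hS : Sᵀ = S) : up S + (up S)ᵀ = S := by
  ext i j
  have hsym : S j i = S i j := congrFun (congrFun hS i) j
  rcases lt_trichotomy i j with h | rfl | h
  · simp [up, h.ne, h.le, h.ne', not_le.mpr h]
  · simp [up]
  · simp [up, h.ne, h.le, h.ne', not_le.mpr h, hsym]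

theorem HR_mulVec_vec (R S : Matrix (Fin n) (Fin n) ℝ) :
    HR R *ᵥ _root_.vec S = uvec (up ((R⁻¹)ᵀ * S * R⁻¹) * R) := by
  rw [HR, ← mulVec_mulVec, ← mulVec_mulVec, ← mulVec_mulVec, kronecker_mulVec_vec,
    transpose_transpose, Mup_mulVec_vec, kronecker_mulVec_vec, transpose_transpose,
    Matrix.one_mul, Muvec_mulVec_vec]

theorem GR_mulVec_vec {R : Matrix (Fin n) (Fin n) ℝ} (hR : IsUnit R.det)
    (E : Matrix (Fin n) (Fin n) ℝ) :
    GR R *ᵥ _root_.vec E = HR R *ᵥ _root_.vec (Rᵀ * E + Eᵀ * R) := by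
  have hsym : (R⁻¹)ᵀ * (Rᵀ * E + Eᵀ * R) * R⁻¹ = E * R⁻¹ + (R⁻¹)ᵀ * Eᵀ := by
    rw [Matrix.mul_add, Matrix.add_mul, ← Matrix.mul_assoc, ← transpose_mul,
      mul_nonsing_inv _ hR, transpose_one, Matrix.one_mul, Matrix.mul_assoc, Matrix.mul_assoc,
      mul_nonsing_inv _ hR, Matrix.mul_one]
  simp only [GR, HR, ← mulVec_mulVec, add_mulVec, vecPerm_mulVec_vec, kronecker_mulVec_vec]
  simp only [transpose_transpose, transpose_one, Matrix.one_mul, Matrix.mul_one, hsym]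
  rfl

theorem one_div_two_mul_le_spec_HR {R : Matrix (Fin n) (Fin n) ℝ} (hR : R.IsUpperTriangular)
    (hpos : ∀ i, 0 < R i i) (i : Fin n) : 1 / (2 * R i i) ≤ spec (HR R) := by
  have hdet := hR.isUnit_det hpos
  set S : Matrix (Fin n) (Fin n) ℝ := single i i 1
  have hentry : uvec (up ((R⁻¹)ᵀ * S * R⁻¹) * R) ⟨(i, i), le_rfl⟩ = 1 / (2 * R i i) := by
    have hM : ((R⁻¹)ᵀ * S * R⁻¹) i i = R⁻¹ i i * R⁻¹ i i := by
      rw [mul_apply, Finset.sum_eq_single i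
        (fun k _ hk => by rw [mul_single_apply_of_ne _ _ _ _ _ hk, zero_mul]) (by simp),
        mul_single_apply_same, transpose_apply, mul_one]
    have := (hpos i).ne'
    simp only [uvec]
    rw [(isUpperTriangular_up _).mul_apply_self hR, up_apply_self, hM, hR.inv_apply_self hdet]
    field_simp
  have hS : frob S = 1 := by simp [S, frob, single_apply, ite_pow, ite_and]
  calc 1 / (2 * R i i) ≤ vnorm (HR R *ᵥ _root_.vec S) := by
        rw [HR_mulVec_vec, ← hentry]
        exact (le_abs_self _).trans (abs_apply_le_vnorm _ _)
    _ ≤ spec (HR R) := by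
        simpa [vnorm_vec, hS] using vnorm_mulVec_le (HR R) (_root_.vec S)

end Vec

theorem exists_fixedPoint_norm_le_of_quadratic {V : Type*} [NormedAddCommGroup V]
    [CompleteSpace V] {F : V → V} {c h : ℝ} (hh : 0 ≤ h) (hhc : 4 * h * c < 1)
    (hbound : ∀ v, ‖F v‖ ≤ c + h * ‖v‖ ^ 2)
    (hlip : ∀ v w, ‖F v - F w‖ ≤ h * (‖v‖ + ‖w‖) * ‖v - w‖) :
    ∃ v, F v = v ∧ ‖v‖ ≤ 2 * c / (1 + √(1 - 4 * h * c)) := by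
  have hc : 0 ≤ c := by simpa using (norm_nonneg _).trans (hbound 0)
  set s := √(1 - 4 * h * c)
  set ρ := 2 * c / (1 + s)
  have hs : s ^ 2 = 1 - 4 * h * c := Real.sq_sqrt (by linarith)
  have hs0 : 0 < s := Real.sqrt_pos.mpr (by linarith)
  have hρ0 : 0 ≤ ρ := by positivity
  have hρs : ρ * (1 + s) = 2 * c := div_mul_cancel₀ _ (by positivity)
  -- `ρ` is the smaller root of `h ρ² - ρ + c = 0`
  have hK : 2 * h * ρ = 1 - s := by
    refine mul_right_cancel₀ (by positivity : (1 + s) ≠ 0) ?_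
    linear_combination 2 * h * hρs + hs
  have hroot : c + h * ρ ^ 2 = ρ := by linear_combination (-1 / 2 : ℝ) * hρs + ρ / 2 * hK
  have hmaps : Set.MapsTo F (Metric.closedBall 0 ρ) (Metric.closedBall 0 ρ) := fun v hv => by
    rw [mem_closedBall_zero_iff] at hv ⊢
    calc ‖F v‖ ≤ c + h * ‖v‖ ^ 2 := hbound v
      _ ≤ c + h * ρ ^ 2 := by gcongr
      _ = ρ := hroot
  have hcontr : ContractingWith (⟨2 * h * ρ, by positivity⟩ : NNReal)
      (hmaps.restrict F (Metric.closedBall 0 ρ) (Metric.closedBall 0 ρ)) := by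
    refine ⟨NNReal.coe_lt_coe.mp (show 2 * h * ρ < 1 by linarith), ?_⟩
    refine LipschitzWith.of_dist_le_mul fun v w => ?_
    have hv := mem_closedBall_zero_iff.mp v.2
    have hw := mem_closedBall_zero_iff.mp w.2
    simp only [Subtype.dist_eq, Set.MapsTo.val_restrict_apply, dist_eq_norm]
    calc ‖F v - F w‖ ≤ h * (‖(v : V)‖ + ‖(w : V)‖) * ‖(v : V) - w‖ := hlip v w
      _ ≤ h * (ρ + ρ) * ‖(v : V) - w‖ := by gcongr
      _ = 2 * h * ρ * ‖(v : V) - w‖ := by ring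
  obtain ⟨v, hv, hfix, -⟩ := hcontr.exists_fixedPoint' Metric.isClosed_closedBall.isComplete
    hmaps (Metric.mem_closedBall_self hρ0) (edist_ne_top _ _)
  exact ⟨v, hfix, mem_closedBall_zero_iff.mp hv⟩

section Perturbation

variable {n : ℕ}

section

variable {m : ℕ} (E : Matrix (Fin n) (Fin n) ℝ) (D : Matrix (Fin m) (Fin n) ℝ)
  (R : Matrix (Fin n) (Fin n) ℝ)

/-- The map whose fixed points `w` give the perturbations `ΔR = fromUvec w` of the `R`-factor,
for `E = Qᵀ ΔA` and `D = ΔA`. -/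
def perturbationMap (w : UpperIdx n → ℝ) : UpperIdx n → ℝ :=
  GR R *ᵥ _root_.vec E + HR R *ᵥ _root_.vec (Dᵀ * D - (fromUvec w)ᵀ * fromUvec w)

theorem vnorm_perturbationMap_le (w : UpperIdx n → ℝ) :
    vnorm (perturbationMap E D R w) ≤
      spec (GR R) * frob E + spec (HR R) * frob D ^ 2 + spec (HR R) * vnorm w ^ 2 := by
  rw [← frob_fromUvec w]
  set X := fromUvec w
  calc vnorm (perturbationMap E D R w)
      ≤ spec (GR R) * frob E + spec (HR R) * frob (Dᵀ * D - Xᵀ * X) := by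
        refine (vnorm_add_le _ _).trans (add_le_add ?_ ?_)
        · simpa only [vnorm_vec] using vnorm_mulVec_le (GR R) (_root_.vec E)
        · simpa only [vnorm_vec] using vnorm_mulVec_le (HR R) (_root_.vec (Dᵀ * D - Xᵀ * X))
    _ ≤ spec (GR R) * frob E + spec (HR R) * (frob D ^ 2 + frob X ^ 2) := by
        gcongr
        · exact spec_nonneg _
        · exact (frob_sub_le _ _).trans
            (add_le_add (frob_transpose_mul_self_le D) (frob_transpose_mul_self_le X))
    _ = _ := by ring

theorem vnorm_perturbationMap_sub_le (v w : UpperIdx n → ℝ) :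
    vnorm (perturbationMap E D R v - perturbationMap E D R w) ≤
      spec (HR R) * (vnorm v + vnorm w) * vnorm (v - w) := by
  rw [← frob_fromUvec v, ← frob_fromUvec w, ← frob_fromUvec (v - w), fromUvec_sub]
  set Xv := fromUvec v
  set Xw := fromUvec w
  have hdiff : perturbationMap E D R v - perturbationMap E D R w =
      HR R *ᵥ _root_.vec (Xwᵀ * Xw - Xvᵀ * Xv) := by
    rw [perturbationMap, perturbationMap, add_sub_add_left_eq_sub, ← mulVec_sub]
    congr 1
    funext p
    simp only [Pi.sub_apply, _root_.vec, Matrix.sub_apply, Xv, Xw]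
    ring
  rw [hdiff]
  calc vnorm (HR R *ᵥ _root_.vec (Xwᵀ * Xw - Xvᵀ * Xv))
      ≤ spec (HR R) * frob (Xwᵀ * Xw - Xvᵀ * Xv) := by
        simpa only [vnorm_vec] using vnorm_mulVec_le (HR R) (_root_.vec (Xwᵀ * Xw - Xvᵀ * Xv))
    _ ≤ spec (HR R) * ((frob Xw + frob Xv) * frob (Xw - Xv)) :=
        mul_le_mul_of_nonneg_left (frob_transpose_mul_self_sub_le _ _) (spec_nonneg _)
    _ = spec (HR R) * (frob Xv + frob Xw) * frob (Xv - Xw) := by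
        rw [frob_sub_comm]
        ring

theorem exists_upperTriangular_uvec_eq
    (hhc : 4 * spec (HR R) * (spec (GR R) * frob E + spec (HR R) * frob D ^ 2) < 1) :
    ∃ X : Matrix (Fin n) (Fin n) ℝ, X.IsUpperTriangular ∧
      uvec X = GR R *ᵥ _root_.vec E + HR R *ᵥ _root_.vec (Dᵀ * D - Xᵀ * X) ∧
      frob X ≤ 2 * (spec (GR R) * frob E + spec (HR R) * frob D ^ 2) /
        (1 + √(1 - 4 * spec (HR R) * (spec (GR R) * frob E + spec (HR R) * frob D ^ 2))) := by
  have hnorm : ∀ w : EuclideanSpace ℝ (UpperIdx n), ‖w‖ = vnorm w.ofLp := fun w => by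
    simp [vnorm_eq_norm]
  obtain ⟨v, hfix, hv⟩ := exists_fixedPoint_norm_le_of_quadratic
    (F := fun w => WithLp.toLp 2 (perturbationMap E D R w.ofLp)) (spec_nonneg _) hhc
    (fun w => by simpa only [hnorm] using vnorm_perturbationMap_le E D R w.ofLp)
    (fun v w => by
      simpa only [hnorm, WithLp.ofLp_sub, WithLp.ofLp_toLp] using
        vnorm_perturbationMap_sub_le E D R v.ofLp w.ofLp)
  refine ⟨fromUvec v.ofLp, isUpperTriangular_fromUvec _, ?_, ?_⟩
  · rw [uvec_fromUvec]
    exact (congrArg WithLp.ofLp hfix).symm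
  · rwa [frob_fromUvec, ← hnorm]

end

theorem transpose_mul_add_transpose_mul_eq {R X S : Matrix (Fin n) (Fin n) ℝ}
    (hR : R.IsUpperTriangular) (hdet : IsUnit R.det) (hX : X.IsUpperTriangular) (hS : Sᵀ = S)
    (h : uvec X = HR R *ᵥ _root_.vec S) : Rᵀ * X + Xᵀ * R = S := by
  set M := (R⁻¹)ᵀ * S * R⁻¹
  have hM : Mᵀ = M := by
    rw [transpose_mul, transpose_mul, transpose_transpose, hS, ← Matrix.mul_assoc]
  have hXM : X = up M * R := by
    rw [← fromUvec_uvec hX, h, HR_mulVec_vec, fromUvec_uvec ((isUpperTriangular_up M).mul hR)]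
  calc Rᵀ * X + Xᵀ * R = Rᵀ * (up M + (up M)ᵀ) * R := by
        rw [hXM, transpose_mul, Matrix.mul_add, Matrix.add_mul, Matrix.mul_assoc, Matrix.mul_assoc]
    _ = (Rᵀ * (R⁻¹)ᵀ) * S * (R⁻¹ * R) := by
        rw [up_add_transpose_up hM]
        simp only [M, Matrix.mul_assoc]
    _ = S := by
        rw [← transpose_mul, nonsing_inv_mul _ hdet, transpose_one, Matrix.one_mul, Matrix.mul_one]

theorem transpose_mul_self_eq_of_uvec_eq {m : ℕ} {Q D : Matrix (Fin m) (Fin n) ℝ}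
    {R X : Matrix (Fin n) (Fin n) ℝ} (hQ : Qᵀ * Q = 1) (hR : R.IsUpperTriangular)
    (hdet : IsUnit R.det) (hX : X.IsUpperTriangular)
    (h : uvec X = GR R *ᵥ _root_.vec (Qᵀ * D) + HR R *ᵥ _root_.vec (Dᵀ * D - Xᵀ * X)) :
    (Q * R + D)ᵀ * (Q * R + D) = (R + X)ᵀ * (R + X) := by
  set E := Qᵀ * D
  set S := Rᵀ * E + Eᵀ * R + (Dᵀ * D - Xᵀ * X)
  have hS : Sᵀ = S := by
    simp only [S, transpose_add, transpose_sub, transpose_mul, transpose_transpose]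
    abel
  have hlin : Rᵀ * X + Xᵀ * R = S := by
    refine transpose_mul_add_transpose_mul_eq hR hdet hX hS ?_
    rw [h, GR_mulVec_vec hdet, ← mulVec_add]
    rfl
  have hDQ : Dᵀ * Q = Eᵀ := by rw [transpose_mul, transpose_transpose]
  calc (Q * R + D)ᵀ * (Q * R + D) = Rᵀ * (Qᵀ * Q) * R + Rᵀ * E + (Dᵀ * Q) * R + Dᵀ * D := by
        simp only [E, transpose_add, transpose_mul, Matrix.add_mul, Matrix.mul_add,
          Matrix.mul_assoc]
        abel
    _ = Rᵀ * R + (Rᵀ * X + Xᵀ * R) + Xᵀ * X := by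
        rw [hQ, hDQ, hlin, Matrix.mul_one]
        simp only [S]
        abel
    _ = (R + X)ᵀ * (R + X) := by
        simp only [transpose_add, Matrix.add_mul, Matrix.mul_add]
        abel

theorem add_apply_self_pos_of_frob_lt {R X : Matrix (Fin n) (Fin n) ℝ} (hR : R.IsUpperTriangular)
    (hpos : ∀ i, 0 < R i i) (hX : 2 * spec (HR R) * frob X < 1) (i : Fin n) :
    0 < (R + X) i i := by
  have hi := one_div_two_mul_le_spec_HR hR hpos i
  rw [div_le_iff₀ (by linarith [hpos i])] at hi
  have hXi := abs_apply_le_frob X i i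
  rw [Matrix.add_apply]
  nlinarith [neg_abs_le (X i i), frob_nonneg X, spec_nonneg (HR R)]

end Perturbation

theorem stmt4_general {m n : ℕ} (A Q ΔA : Matrix (Fin m) (Fin n) ℝ)
    (R : Matrix (Fin n) (Fin n) ℝ)
    (hQ : Qᵀ * Q = 1) (hR : IsUpperTri R)
    (hRpos : ∀ i, 0 < R i i) (hA : A = Q * R)
    (hcond : spec (HR R) * (spec (GR R) * frob ΔA + spec (HR R) * (frob ΔA) ^ 2) < 1 / 4) :
    ∃ ΔQ : Matrix (Fin m) (Fin n) ℝ, ∃ ΔR : Matrix (Fin n) (Fin n) ℝ,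
      (Q + ΔQ)ᵀ * (Q + ΔQ) = 1 ∧ IsUpperTri (R + ΔR) ∧ (∀ i, 0 < (R + ΔR) i i) ∧
      A + ΔA = (Q + ΔQ) * (R + ΔR) ∧
      (∀ ΔQ' ΔR', (Q + ΔQ')ᵀ * (Q + ΔQ') = 1 → IsUpperTri (R + ΔR') →
        (∀ i, 0 < (R + ΔR') i i) → A + ΔA = (Q + ΔQ') * (R + ΔR') →
        ΔQ' = ΔQ ∧ ΔR' = ΔR) ∧
      frob ΔR ≤
        2 * (spec (GR R) * frob (Qᵀ * ΔA) + spec (HR R) * (frob ΔA) ^ 2) /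
          (1 + Real.sqrt (1 - 4 * spec (HR R) *
            (spec (GR R) * frob (Qᵀ * ΔA) + spec (HR R) * (frob ΔA) ^ 2))) ∧
      2 * (spec (GR R) * frob (Qᵀ * ΔA) + spec (HR R) * (frob ΔA) ^ 2) /
          (1 + Real.sqrt (1 - 4 * spec (HR R) *
            (spec (GR R) * frob (Qᵀ * ΔA) + spec (HR R) * (frob ΔA) ^ 2))) ≤
        2 * (spec (GR R) * frob (Qᵀ * ΔA) + spec (HR R) * (frob ΔA) ^ 2) := by
  subst hA
  replace hR : R.IsUpperTriangular := hR
  set c := spec (GR R) * frob (Qᵀ * ΔA) + spec (HR R) * frob ΔA ^ 2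
  have hc : 0 ≤ c := add_nonneg (mul_nonneg (spec_nonneg _) (frob_nonneg _))
    (mul_nonneg (spec_nonneg _) (sq_nonneg _))
  have hhc : 4 * spec (HR R) * c < 1 := by
    have := mul_le_mul_of_nonneg_left (frob_transpose_mul_le hQ ΔA) (spec_nonneg (GR R))
    nlinarith [spec_nonneg (HR R)]
  have hρ : 2 * c / (1 + √(1 - 4 * spec (HR R) * c)) ≤ 2 * c :=
    div_le_self (by positivity) (by simp)
  obtain ⟨ΔR, hΔR, hfix, hbound⟩ := exists_upperTriangular_uvec_eq (Qᵀ * ΔA) ΔA R hhc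
  have hpos : ∀ i, 0 < (R + ΔR) i i :=
    add_apply_self_pos_of_frob_lt hR hRpos (by nlinarith [spec_nonneg (HR R)])
  have hupper : (R + ΔR).IsUpperTriangular := hR.add hΔR
  obtain ⟨Q', hQ', hfact⟩ := exists_orthonormal_mul_eq_of_transpose_mul_self_eq
    (hupper.isUnit_det hpos) (transpose_mul_self_eq_of_uvec_eq hQ hR (hR.isUnit_det hRpos) hΔR hfix)
  refine ⟨Q' - Q, ΔR, by rwa [add_sub_cancel], hupper, hpos, by rwa [add_sub_cancel], ?_,
    hbound, hρ⟩
  intro ΔQ' ΔR' hQ'' hupper' hpos' hfact'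
  obtain ⟨hQeq, hReq⟩ := qr_unique hQ'' hupper' hpos' hQ' hupper hpos hfact' hfact
  exact ⟨by rw [← hQeq, add_sub_cancel_left], add_left_cancel hReq⟩

theorem stmt4 {m n : ℕ} (A Q ΔA : Matrix (Fin m) (Fin n) ℝ)
    (R : Matrix (Fin n) (Fin n) ℝ)
    (hrank : A.rank = n) (hQ : Qᵀ * Q = 1) (hR : IsUpperTri R)
    (hRpos : ∀ i, 0 < R i i) (hA : A = Q * R)
    (hcond : spec (HR R) * (spec (GR R) * frob ΔA + spec (HR R) * (frob ΔA) ^ 2) < 1 / 4) :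
    ∃ ΔQ : Matrix (Fin m) (Fin n) ℝ, ∃ ΔR : Matrix (Fin n) (Fin n) ℝ,
      (Q + ΔQ)ᵀ * (Q + ΔQ) = 1 ∧ IsUpperTri (R + ΔR) ∧ (∀ i, 0 < (R + ΔR) i i) ∧
      A + ΔA = (Q + ΔQ) * (R + ΔR) ∧
      (∀ ΔQ' ΔR', (Q + ΔQ')ᵀ * (Q + ΔQ') = 1 → IsUpperTri (R + ΔR') →
        (∀ i, 0 < (R + ΔR') i i) → A + ΔA = (Q + ΔQ') * (R + ΔR') →
        ΔQ' = ΔQ ∧ ΔR' = ΔR) ∧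
      frob ΔR ≤
        2 * (spec (GR R) * frob (Qᵀ * ΔA) + spec (HR R) * (frob ΔA) ^ 2) /
          (1 + Real.sqrt (1 - 4 * spec (HR R) *
            (spec (GR R) * frob (Qᵀ * ΔA) + spec (HR R) * (frob ΔA) ^ 2))) ∧
      2 * (spec (GR R) * frob (Qᵀ * ΔA) + spec (HR R) * (frob ΔA) ^ 2) /
          (1 + Real.sqrt (1 - 4 * spec (HR R) *
            (spec (GR R) * frob (Qᵀ * ΔA) + spec (HR R) * (frob ΔA) ^ 2))) ≤
        2 * (spec (GR R) * frob (Qᵀ * ΔA) + spec (HR R) * (frob ΔA) ^ 2) :=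
  stmt4_general A Q ΔA R hQ hR hRpos hA hcond
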